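/- arXiv:2209.03445 — 3 statements merged into one kernel-verified Lean document; each statement's English description precedes it below -/
import Mathlib

section
/- Let f : (0,1] → [0,∞) be a non-increasing function. Suppose there exist a ∈ (0,1), C ∈ [0,∞) and D ∈ (1,∞) such that f(aⁿ) ≤ C + D·f(aⁿ⁻¹) for all n ∈ ℕ. Then for all t ∈ (0,1], f(t) + C/(D−1) ≤ D·(f(1) + C/(D−1))·t^(log_a D). -/
/-!
Shifting by the fixed point `-C / (D - 1)` of `x ↦ C + D x` turns the recurrence into
`g (aⁿ) ≤ D g (aⁿ⁻¹)` for `g = f + C / (D - 1)`, so `g (aⁿ) ≤ Dⁿ g 1`.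
A point `t ∈ (0, 1]` lies in some `(aᵐ⁺¹, aᵐ]`; monotonicity gives
`g t ≤ g (aᵐ⁺¹) ≤ D · Dᵐ g 1`, and `Dᵐ = (aᵐ) ^ log_a D ≤ t ^ log_a D` because the exponent
is negative.
-/

theorem add_div_sub_one_le_pow_mul_of_le_add_mul {u : ℕ → ℝ} {C D : ℝ} (hD0 : 0 ≤ D)
    (hD1 : D ≠ 1) (hu : ∀ n, u (n + 1) ≤ C + D * u n) (n : ℕ) :
    u n + C / (D - 1) ≤ D ^ n * (u 0 + C / (D - 1)) := by
  induction n with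
  | zero => simp
  | succ n ih =>
    have hshift : C + D * u n + C / (D - 1) = D * (u n + C / (D - 1)) := by
      field_simp [sub_ne_zero.2 hD1]
      ring
    calc u (n + 1) + C / (D - 1) ≤ D * (u n + C / (D - 1)) := by linarith [hu n]
      _ ≤ D * (D ^ n * (u 0 + C / (D - 1))) := mul_le_mul_of_nonneg_left ih hD0
      _ = D ^ (n + 1) * (u 0 + C / (D - 1)) := by ring

theorem pow_le_rpow_logb_of_le_pow {a D t : ℝ} (ha : 0 < a) (ha1 : a < 1) (hD : 1 ≤ D)
    (ht : 0 < t) {m : ℕ} (htm : t ≤ a ^ m) : D ^ m ≤ t ^ Real.logb a D := by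
  have hD0 : 0 < D := zero_lt_one.trans_le hD
  calc D ^ m = (a ^ Real.logb a D) ^ m := by rw [Real.rpow_logb ha ha1.ne hD0]
    _ = (a ^ m) ^ Real.logb a D := Real.rpow_pow_comm ha.le _ m
    _ ≤ t ^ Real.logb a D := Real.rpow_le_rpow_of_nonpos ht htm
        ((Real.logb_nonpos_iff_of_base_lt_one ha ha1 hD0).2 hD)

theorem stmt_0 (f : ℝ → ℝ) (a C D : ℝ)
    (hf_nonneg : ∀ t, 0 < t → t ≤ 1 → 0 ≤ f t)
    (hf_mono : ∀ s t, 0 < s → s ≤ t → t ≤ 1 → f t ≤ f s)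
    (ha : 0 < a) (ha1 : a < 1) (hC : 0 ≤ C) (hD : 1 < D)
    (hrec : ∀ n : ℕ, 1 ≤ n → f (a ^ n) ≤ C + D * f (a ^ (n - 1))) :
    ∀ t, 0 < t → t ≤ 1 →
      f t + C / (D - 1) ≤ D * (f 1 + C / (D - 1)) * t ^ (Real.log D / Real.log a) := by
  intro t ht ht1
  obtain ⟨m, hlt, hle⟩ := exists_nat_pow_near_of_lt_one ht ht1 ha ha1
  have hgeom := add_div_sub_one_le_pow_mul_of_le_add_mul (u := fun n => f (a ^ n))
    (zero_le_one.trans hD.le) hD.ne' (fun n => by simpa using hrec (n + 1) n.succ_pos) (m + 1)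
  have hf1 : 0 ≤ f 1 + C / (D - 1) :=
    add_nonneg (hf_nonneg 1 one_pos le_rfl) (div_nonneg hC (sub_nonneg.2 hD.le))
  calc f t + C / (D - 1) ≤ f (a ^ (m + 1)) + C / (D - 1) := by
        gcongr
        exact hf_mono _ _ (pow_pos ha _) hlt.le ht1
    _ ≤ D ^ (m + 1) * (f 1 + C / (D - 1)) := by simpa using hgeom
    _ = D * (f 1 + C / (D - 1)) * D ^ m := by ring
    _ ≤ D * (f 1 + C / (D - 1)) * t ^ (Real.log D / Real.log a) := by
        gcongr
        exact pow_le_rpow_logb_of_le_pow ha ha1 hD.le ht hle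
end

section
/- Let X be a p-Banach space, 0 < p ≤ 1, with a basis having threshold function φ (defined as the least C with ‖S_A(f)‖ ≤ C‖f‖ for f ∈ Q, A ⊆ A(f,a)). Suppose φ(c) < ∞ for some c ∈ (0,1). Then φ(a) < ∞ for every a ∈ (0,1], and moreover φ(a) ≤ C·a^(−d) where C = (1 + (1−c)ᵖφ(c)ᵖ)^(1/p)·(φ(1)ᵖ + 1)^(1/p) and d = −(1/p)·log_c(1 + (1−c)ᵖφ(c)ᵖ). -/
/-!
Put `K = 1 + (1 - c)ᵖ φ(c)ᵖ`. Taking `b = c` in the submultiplicative inequality and bounding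
`θ(c) ≤ φ(c)` gives `φ(c^(n+1))ᵖ + 1 ≤ K (φ(cⁿ)ᵖ + 1)`, so `φ(cⁿ)ᵖ + 1 ≤ Kⁿ (φ(1)ᵖ + 1)`.
Since `φ` is non-increasing, a point `a ∈ (0, 1]` is handled by the first `n ≥ log_c a`, for which
`cⁿ ≤ a` and `Kⁿ ≤ K · K^(log_c a) = K · a^(log K / log c)`; taking `p`-th roots finishes the proof.
-/

open ENNReal Real

theorem le_pow_mul_of_succ_le {M : Type*} [CommMonoid M] [Preorder M] [MulLeftMono M]
    {u : ℕ → M} {K : M} (h : ∀ n, u (n + 1) ≤ K * u n) (n : ℕ) : u n ≤ K ^ n * u 0 := by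
  induction n with
  | zero => simp
  | succ n ih =>
    calc u (n + 1) ≤ K * u n := h n
      _ ≤ K * (K ^ n * u 0) := mul_le_mul_right ih K
      _ = K ^ (n + 1) * u 0 := by rw [pow_succ', mul_assoc]

namespace Real

theorem rpow_logb_eq_rpow_log_div_log {b x y : ℝ} (hx : 0 < x) (hy : 0 < y) :
    y ^ logb b x = x ^ (log y / log b) := by
  rw [rpow_def_of_pos hx, rpow_def_of_pos hy, logb, mul_div_left_comm]

theorem pow_natCeil_logb_le {c a : ℝ} (hc : 0 < c) (hc1 : c < 1) (ha : 0 < a) :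
    c ^ ⌈logb c a⌉₊ ≤ a := by
  calc c ^ ⌈logb c a⌉₊ = c ^ (⌈logb c a⌉₊ : ℝ) := (rpow_natCast c _).symm
    _ ≤ c ^ logb c a := rpow_le_rpow_of_exponent_ge hc hc1.le (Nat.le_ceil _)
    _ = a := rpow_logb hc hc1.ne ha

end Real

theorem le_mul_rpow_of_le_pow {ψ : ℝ → ℝ≥0∞} {c K : ℝ} {B : ℝ≥0∞} (hc : 0 < c) (hc1 : c < 1)
    (hK : 1 ≤ K) (hmono : ∀ a b, 0 < a → a ≤ b → b ≤ 1 → ψ b ≤ ψ a)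
    (hpow : ∀ n : ℕ, ψ (c ^ n) ≤ ENNReal.ofReal K ^ n * B) {a : ℝ} (ha : 0 < a) (ha1 : a ≤ 1) :
    ψ a ≤ ENNReal.ofReal (K * a ^ (log K / log c)) * B := by
  set n := ⌈logb c a⌉₊
  have hKn : K ^ n ≤ K * a ^ (log K / log c) :=
    calc K ^ n = K ^ (n : ℝ) := (rpow_natCast K n).symm
      _ ≤ K ^ (logb c a + 1) := rpow_le_rpow_of_exponent_le hK
        (Nat.ceil_lt_add_one (logb_nonneg_of_base_lt_one hc hc1 ha ha1)).le
      _ = K * a ^ (log K / log c) := by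
        rw [rpow_add_one (by positivity), rpow_logb_eq_rpow_log_div_log ha (by positivity), mul_comm]
  calc ψ a ≤ ψ (c ^ n) := hmono _ _ (pow_pos hc n) (pow_natCeil_logb_le hc hc1 ha) ha1
    _ ≤ ENNReal.ofReal K ^ n * B := hpow n
    _ ≤ ENNReal.ofReal (K * a ^ (log K / log c)) * B := by
      rw [← ENNReal.ofReal_pow (by positivity)]
      gcongr

theorem ENNReal.le_ofReal_rpow_one_div_of_rpow_le {x : ℝ≥0∞} {y p : ℝ} (hp : 0 < p) (hy : 0 ≤ y)
    (h : x ^ p ≤ ENNReal.ofReal y) : x ≤ ENNReal.ofReal (y ^ (1 / p)) := by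
  rw [← ENNReal.ofReal_rpow_of_nonneg hy (by positivity), one_div]
  exact (ENNReal.le_rpow_inv_iff hp).2 h

theorem rpow_apply_pow_add_one_le_pow_mul {φ θ : ℝ → ℝ≥0∞} {p c : ℝ} (hp : 0 ≤ p)
    (hc : 0 < c) (hc1 : c ≤ 1) (hθc : θ c ≤ φ c)
    (hsub : ∀ a, 0 < a → a ≤ 1 →
      φ (a * c) ^ p ≤ ENNReal.ofReal ((1 - c) ^ p) * φ c ^ p
        + φ a ^ p * (1 + ENNReal.ofReal ((1 - c) ^ p) * θ c ^ p)) (n : ℕ) :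
    φ (c ^ n) ^ p + 1 ≤ (1 + ENNReal.ofReal ((1 - c) ^ p) * φ c ^ p) ^ n * (φ 1 ^ p + 1) := by
  set E := ENNReal.ofReal ((1 - c) ^ p)
  refine le_pow_mul_of_succ_le (u := fun n => φ (c ^ n) ^ p + 1) (fun n => ?_) n
  calc φ (c ^ (n + 1)) ^ p + 1
      ≤ E * φ c ^ p + φ (c ^ n) ^ p * (1 + E * φ c ^ p) + 1 := by
        rw [pow_succ]
        grw [hsub _ (pow_pos hc n) (pow_le_one₀ hc.le hc1), ENNReal.rpow_le_rpow hθc hp]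
    _ = (1 + E * φ c ^ p) * (φ (c ^ n) ^ p + 1) := by ring

open ENNReal in
theorem stmt_10_general (φ θ : ℝ → ℝ≥0∞) (p c : ℝ) (hp : 0 < p)
    (hc : 0 < c) (hc1 : c < 1)
    (hmono : ∀ a b, 0 < a → a ≤ b → b ≤ 1 → φ b ≤ φ a)
    (hθφ : ∀ a, 0 < a → a ≤ 1 → θ a ≤ φ a)
    (hsub : ∀ a b, 0 < a → a ≤ 1 → 0 < b → b ≤ 1 →
      φ (a * b) ^ p ≤ ENNReal.ofReal ((1 - b) ^ p) * φ b ^ p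
        + φ a ^ p * (1 + ENNReal.ofReal ((1 - b) ^ p) * θ b ^ p))
    (hφc : φ c ≠ ⊤) :
    ∀ a, 0 < a → a ≤ 1 → φ a ≠ ⊤ ∧
      φ a ≤ ENNReal.ofReal
        (((1 + (1 - c) ^ p * (φ c).toReal ^ p) ^ (1 / p)
            * ((φ 1).toReal ^ p + 1) ^ (1 / p))
          * a ^ ((1 / p) * (Real.log (1 + (1 - c) ^ p * (φ c).toReal ^ p) / Real.log c))) := by
  intro a ha ha1
  set k := 1 + (1 - c) ^ p * (φ c).toReal ^ p
  set b := (φ 1).toReal ^ p + 1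
  have hφ1 : φ 1 ≠ ⊤ := ne_top_of_le_ne_top hφc (hmono c 1 hc hc1.le le_rfl)
  have hk1 : 1 ≤ k := le_add_of_nonneg_right (by positivity)
  have hk : ENNReal.ofReal k = 1 + ENNReal.ofReal ((1 - c) ^ p) * φ c ^ p := by
    rw [ENNReal.ofReal_add zero_le_one (by positivity), ENNReal.ofReal_one,
      ENNReal.ofReal_mul (by positivity), ← ENNReal.ofReal_rpow_of_nonneg toReal_nonneg hp.le,
      ofReal_toReal hφc]
  have hb : ENNReal.ofReal b = φ 1 ^ p + 1 := by
    rw [ENNReal.ofReal_add (by positivity) zero_le_one, ENNReal.ofReal_one,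
      ← ENNReal.ofReal_rpow_of_nonneg toReal_nonneg hp.le, ofReal_toReal hφ1]
  have hgrowth : φ a ^ p + 1 ≤ ENNReal.ofReal (k * a ^ (log k / log c)) * ENNReal.ofReal b :=
    le_mul_rpow_of_le_pow (ψ := fun a => φ a ^ p + 1) hc hc1 hk1
      (fun x y hx hxy hy1 => by grw [hmono x y hx hxy hy1])
      (fun n => by
        rw [hk, hb]
        exact rpow_apply_pow_add_one_le_pow_mul hp.le hc hc1.le (hθφ c hc hc1.le)
          (fun x hx hx1 => hsub x c hx hx1 hc hc1.le) n) ha ha1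
  have hbound : φ a ≤ ENNReal.ofReal ((k * a ^ (log k / log c) * b) ^ (1 / p)) := by
    refine ENNReal.le_ofReal_rpow_one_div_of_rpow_le hp (by positivity) ?_
    rw [ENNReal.ofReal_mul (by positivity)]
    exact le_self_add.trans hgrowth
  have hroot : (k * a ^ (log k / log c) * b) ^ (1 / p)
      = k ^ (1 / p) * b ^ (1 / p) * a ^ (1 / p * (log k / log c)) := by
    rw [mul_rpow (by positivity) (by positivity), mul_rpow (by positivity) (by positivity),
      ← rpow_mul ha.le, mul_comm (log k / log c)]
    ring
  rw [hroot] at hbound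
  exact ⟨ne_top_of_le_ne_top ofReal_ne_top hbound, hbound⟩

open ENNReal in
theorem stmt_10 (φ θ : ℝ → ℝ≥0∞) (p c : ℝ) (hp : 0 < p) (hp1 : p ≤ 1)
    (hc : 0 < c) (hc1 : c < 1)
    (hφ1 : ∀ a, 0 < a → a ≤ 1 → 1 ≤ φ a)
    (hmono : ∀ a b, 0 < a → a ≤ b → b ≤ 1 → φ b ≤ φ a)
    (hθφ : ∀ a, 0 < a → a ≤ 1 → θ a ≤ φ a)
    (hsub : ∀ a b, 0 < a → a ≤ 1 → 0 < b → b ≤ 1 →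
      φ (a * b) ^ p ≤ ENNReal.ofReal ((1 - b) ^ p) * φ b ^ p
        + φ a ^ p * (1 + ENNReal.ofReal ((1 - b) ^ p) * θ b ^ p))
    (hφc : φ c ≠ ⊤) :
    ∀ a, 0 < a → a ≤ 1 → φ a ≠ ⊤ ∧
      φ a ≤ ENNReal.ofReal
        (((1 + (1 - c) ^ p * (φ c).toReal ^ p) ^ (1 / p)
            * ((φ 1).toReal ^ p + 1) ^ (1 / p))
          * a ^ ((1 / p) * (Real.log (1 + (1 - c) ^ p * (φ c).toReal ^ p) / Real.log c))) :=
  stmt_10_general φ θ p c hp hc hc1 hmono hθφ hsub hφc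
end

section
/- Let f* be a norm-one continuous linear functional on a real Banach space X and let (x_n)_{n∈A} be a finite family with f*(∑_{n∈A} x_n) = ‖∑_{n∈A} x_n‖ and ‖∑_{n∈B} x_n‖ ≤ ‖∑_{n∈A} x_n‖ for all B ⊆ A. Then f*(x_n) ≥ 0 for every n ∈ A. -/
theorem Finset.nonneg_of_sum_filter_nonneg_le {ι M : Type*} [AddCommGroup M] [LinearOrder M]
    [IsOrderedAddMonoid M] (A : Finset ι) (f : ι → M)
    (h : ∑ i ∈ A.filter (0 ≤ f ·), f i ≤ ∑ i ∈ A, f i) : ∀ i ∈ A, 0 ≤ f i := by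
  classical
  intro i hi
  by_contra hneg
  have hneg_sum_nonneg : 0 ≤ ∑ j ∈ A.filter (¬0 ≤ f ·), f j := by
    rw [← sum_filter_add_sum_filter_not A (0 ≤ f ·)] at h
    simpa using h
  have hneg_sum_eq_zero : ∑ j ∈ A.filter (¬0 ≤ f ·), f j = 0 :=
    le_antisymm (sum_nonpos fun j hj => le_of_lt (not_le.mp (mem_filter.mp hj).2))
      hneg_sum_nonneg
  have hfi : f i = 0 := (sum_eq_zero_iff_of_nonpos fun j hj =>
    le_of_lt (not_le.mp (mem_filter.mp hj).2)).mp hneg_sum_eq_zero i (mem_filter.mpr ⟨hi, hneg⟩)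
  exact hneg hfi.ge

theorem ContinuousLinearMap.apply_le_norm_of_opNorm_le_one {X : Type*} [SeminormedAddCommGroup X]
    [NormedSpace ℝ X] (g : X →L[ℝ] ℝ) (hg : ‖g‖ ≤ 1) (y : X) : g y ≤ ‖y‖ :=
  (Real.le_norm_self _).trans (by simpa using g.le_of_opNorm_le hg y)

theorem stmt_15_general {X : Type*} [NormedAddCommGroup X] [NormedSpace ℝ X]
    (g : X →L[ℝ] ℝ) (hg : ‖g‖ = 1)
    {ι : Type*} (A : Finset ι) (x : ι → X)
    (hnorming : g (∑ n ∈ A, x n) = ‖∑ n ∈ A, x n‖)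
    (h : ∀ B ⊆ A, ‖∑ n ∈ B, x n‖ ≤ ‖∑ n ∈ A, x n‖) :
    ∀ n ∈ A, 0 ≤ g (x n) := by
  classical
  apply Finset.nonneg_of_sum_filter_nonneg_le A (fun n => g (x n))
  set B := A.filter fun n => 0 ≤ g (x n)
  calc ∑ n ∈ B, g (x n) = g (∑ n ∈ B, x n) := (map_sum g x B).symm
    _ ≤ ‖∑ n ∈ B, x n‖ := g.apply_le_norm_of_opNorm_le_one hg.le _
    _ ≤ ‖∑ n ∈ A, x n‖ := h B (Finset.filter_subset _ A)
    _ = ∑ n ∈ A, g (x n) := by rw [← hnorming, map_sum]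

theorem stmt_15 {X : Type*} [NormedAddCommGroup X] [NormedSpace ℝ X] [CompleteSpace X]
    (g : X →L[ℝ] ℝ) (hg : ‖g‖ = 1)
    {ι : Type*} (A : Finset ι) (x : ι → X)
    (hnorming : g (∑ n ∈ A, x n) = ‖∑ n ∈ A, x n‖)
    (h : ∀ B ⊆ A, ‖∑ n ∈ B, x n‖ ≤ ‖∑ n ∈ A, x n‖) :
    ∀ n ∈ A, 0 ≤ g (x n) :=
  stmt_15_general g hg A x hnorming h
end
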